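/- arXiv:2501.02218 — 2 statements merged into one kernel-verified Lean document; each statement's English description precedes it below -/
import Mathlib

section
/- Let I=(a,b) be a bounded open interval and let h:(ℝ∖{0})×(ℝ∖{0})→ℝ be symmetric and diagonal. Define H(u)=max over (s,t)∈S(u)×S(u) of h([u](s),[u](t)) for piecewise constant u on I. If h is lower semicontinuous on (ℝ∖{0})×(ℝ∖{0}) and Cartesian submaximal, then H is lower semicontinuous with respect to L¹(I) convergence: for every sequence of piecewise constant functions uₙ converging in L¹(I) to a piecewise constant function u, one has H(u) ≤ liminf H(uₙ). -/
open Filter MeasureTheory Set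

/-- A piecewise constant function on the interval `(a, b)`, given by partition points
`a = t 0 < t 1 < ⋯ < t (N+1) = b` and values `v i` on the subinterval `(t i, t (i+1))`,
with adjacent values distinct (so that `S(u) = {t 1, …, t N}` is the minimal jump set). -/
structure PC (a b : ℝ) where
  N : ℕ
  t : Fin (N + 2) → ℝ
  v : Fin (N + 1) → ℝ
  t_mono : StrictMono t
  t_first : t 0 = a
  t_last : t (Fin.last (N + 1)) = b
  v_ne : ∀ i : Fin N, v i.castSucc ≠ v i.succ

namespace PC

variable {a b : ℝ}

/-- The function represented by the piecewise constant data. -/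
noncomputable def toFun (u : PC a b) : ℝ → ℝ := fun x =>
  ∑ i : Fin (u.N + 1), if u.t i.castSucc ≤ x ∧ x < u.t i.succ then u.v i else 0

/-- The jump `[u](t_{i+1}) = u(t_{i+1}⁺) - u(t_{i+1}⁻)` at the interior partition point
`t_{i+1}`, `i = 0, …, N-1`. -/
def jump (u : PC a b) (i : Fin u.N) : ℝ := u.v i.succ - u.v i.castSucc

/-- `uₙ → u` in `L¹((a,b))`. -/
def L1Tendsto (U : ℕ → PC a b) (u : PC a b) : Prop :=
  Tendsto (fun n => ∫ x in Ioo a b, |(U n).toFun x - u.toFun x|) atTop (nhds 0)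

/-- The nonlocal supremal functional
`H(u) = max_{(s,t) ∈ S(u) × S(u)} h([u](s), [u](t))`, with value `⊥` on jump-free functions. -/
noncomputable def energy (h : ℝ → ℝ → ℝ) (u : PC a b) : EReal :=
  ⨆ (i : Fin u.N) (j : Fin u.N), ((h (u.jump i) (u.jump j) : ℝ) : EReal)

end PC

/-- `H` is sequentially lower semicontinuous along `L¹((a,b))`-convergent sequences
of piecewise constant functions. -/
def EnergyLSC (a b : ℝ) (h : ℝ → ℝ → ℝ) : Prop :=
  ∀ (U : ℕ → PC a b) (u : PC a b), PC.L1Tendsto U u →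
    PC.energy h u ≤ Filter.liminf (fun n => PC.energy h (U n)) atTop

/-- `h` is Cartesian submaximal. -/
def CartesianSubmaximal (h : ℝ → ℝ → ℝ) : Prop :=
  ∀ w₁ w₂ y : ℝ, w₁ ≠ 0 → w₂ ≠ 0 → y ≠ 0 → w₁ + w₂ ≠ 0 →
    h (w₁ + w₂) y ≤ max (max (h w₁ y) (h w₂ y)) (h w₁ w₂)

lemma ERealCoeMax (x y : ℝ) : ((max x y : ℝ) : EReal) = max (x : EReal) (y : EReal) :=
  Monotone.map_max (fun _ _ hxy => EReal.coe_le_coe_iff.mpr hxy)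

lemma listLemma (h : ℝ → ℝ → ℝ)
    (hsymm : ∀ ξ η : ℝ, ξ ≠ 0 → η ≠ 0 → h ξ η = h η ξ)
    (hcs : CartesianSubmaximal h) (M : EReal) :
    ∀ n : ℕ, ∀ L : List ℝ, L.length ≤ n → ∀ y : ℝ,
    (∀ p ∈ L, p ≠ 0) → L.sum ≠ 0 → y ≠ 0 →
    (∀ p ∈ L, ∀ q ∈ L, ((h p q : ℝ) : EReal) ≤ M) →
    (∀ p ∈ L, ((h p y : ℝ) : EReal) ≤ M) →
    ((h L.sum y : ℝ) : EReal) ≤ M := by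
  classical
  intro n
  induction n with
  | zero =>
    intro L hL y _ hsum _ _ _
    rw [List.length_eq_zero_iff.mp (Nat.le_zero.mp hL)] at hsum
    simp at hsum
  | succ n IH =>
    intro L hL y hne hsum hy hpair hpy
    rcases L with _ | ⟨p0, L0⟩
    · simp at hsum
    rcases L0 with _ | ⟨q0, tl⟩
    · have : (p0 :: ([] : List ℝ)).sum = p0 := by simp
      rw [this]
      exact hpy p0 (by simp)
    set L : List ℝ := p0 :: q0 :: tl with hLdef
    have hlen2 : 2 ≤ L.length := by simp [hLdef]
    by_cases hex : ∃ p ∈ L, L.sum - p ≠ 0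
    · obtain ⟨p, hpL, hrest⟩ := hex
      set L' := L.erase p with hL'def
      have hperm := List.perm_cons_erase hpL
      have hsum' : L.sum = p + L'.sum := by rw [hperm.sum_eq]; simp [hL'def]
      have hL'sum : L'.sum = L.sum - p := by rw [hsum']; ring
      have hL'len : L'.length ≤ n := by
        have h1 := List.length_erase_of_mem hpL
        rw [← hL'def] at h1
        omega
      have hmem' : ∀ q ∈ L', q ∈ L := fun q hq => List.mem_of_mem_erase hq
      have hne' : ∀ q ∈ L', q ≠ 0 := fun q hq => hne q (hmem' q hq)
      have hrest0 : L'.sum ≠ 0 := by rw [hL'sum]; exact hrest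
      have hp0 : p ≠ 0 := hne p hpL
      have hpair' : ∀ p1 ∈ L', ∀ q1 ∈ L', ((h p1 q1 : ℝ) : EReal) ≤ M :=
        fun p1 h1 q1 h2 => hpair _ (hmem' _ h1) _ (hmem' _ h2)
      have h1 : ((h p y : ℝ) : EReal) ≤ M := hpy p hpL
      have h2 : ((h L'.sum y : ℝ) : EReal) ≤ M :=
        IH L' hL'len y hne' hrest0 hy hpair' (fun p1 hp1 => hpy _ (hmem' _ hp1))
      have h3 : ((h p L'.sum : ℝ) : EReal) ≤ M := by
        rw [hsymm p L'.sum hp0 hrest0]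
        exact IH L' hL'len p hne' hrest0 hp0 hpair'
          (fun q hq => hpair q (hmem' q hq) p hpL)
      have key : h L.sum y ≤ max (max (h p y) (h L'.sum y)) (h p L'.sum) := by
        rw [hsum']
        exact hcs p L'.sum y hp0 hrest0 hy (hsum' ▸ hsum)
      refine le_trans (EReal.coe_le_coe_iff.mpr key) ?_
      rw [ERealCoeMax, ERealCoeMax]
      exact max_le (max_le h1 h2) h3
    · exfalso
      push_neg at hex
      have hall : ∀ p ∈ L, p = L.sum := by
        intro p hp
        have := hex p hp
        linarith [sub_eq_zero.mp (not_not.mp (by simpa using this))]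
      have hrepl := List.eq_replicate_of_mem hall
      have hsmul : L.sum = L.length • L.sum := by
        conv_lhs => rw [hrepl]
        rw [List.sum_replicate]
      rw [nsmul_eq_mul] at hsmul
      have hcast : (2 : ℝ) ≤ (L.length : ℝ) := by exact_mod_cast hlen2
      have : ((L.length : ℝ) - 1) * L.sum = 0 := by linarith [hsmul]
      rcases mul_eq_zero.mp this with hc | hc
      · linarith
      · exact hsum hc

namespace PC

variable {a b : ℝ}

lemma toFun_eq (u : PC a b) {x : ℝ} {i : Fin (u.N + 1)}
    (h1 : u.t i.castSucc ≤ x) (h2 : x < u.t i.succ) : u.toFun x = u.v i := by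
  unfold PC.toFun
  rw [Finset.sum_eq_single i]
  · rw [if_pos ⟨h1, h2⟩]
  · intro j _ hji
    rw [if_neg]
    rintro ⟨hj1, hj2⟩
    have hval : (j : ℕ) ≠ (i : ℕ) := fun hv => hji (Fin.ext hv)
    rcases lt_or_gt_of_ne hval with hlt | hlt
    · have : u.t j.succ ≤ u.t i.castSucc :=
        u.t_mono.monotone (by simp [Fin.le_def]; omega)
      linarith
    · have : u.t i.succ ≤ u.t j.castSucc :=
        u.t_mono.monotone (by simp [Fin.le_def]; omega)
      linarith
  · intro hi
    exact absurd (Finset.mem_univ i) hi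

lemma exists_index (u : PC a b) {x : ℝ} (h1 : a ≤ x) (h2 : x < b) :
    ∃ i : Fin (u.N + 1), u.t i.castSucc ≤ x ∧ x < u.t i.succ := by
  classical
  set s : Finset (Fin (u.N + 1)) := Finset.univ.filter (fun i => u.t i.castSucc ≤ x)
    with hs
  have h0 : (0 : Fin (u.N + 1)) ∈ s := by
    simp only [hs, Finset.mem_filter, Finset.mem_univ, true_and, Fin.castSucc_zero]
    rw [u.t_first]
    exact h1
  have hne : s.Nonempty := ⟨0, h0⟩
  obtain ⟨i, himem, hmax⟩ : ∃ i ∈ s, ∀ j ∈ s, j ≤ i :=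
    ⟨s.max' hne, s.max'_mem hne, fun j hj => s.le_max' j hj⟩
  have hile : u.t i.castSucc ≤ x := by simpa [hs] using himem
  refine ⟨i, hile, ?_⟩
  by_contra hlt
  push_neg at hlt
  by_cases hN : (i : ℕ) < u.N
  · have hmem : (⟨(i : ℕ) + 1, by omega⟩ : Fin (u.N + 1)) ∈ s := by
      simp only [hs, Finset.mem_filter, Finset.mem_univ, true_and]
      have he : (⟨(i : ℕ) + 1, by omega⟩ : Fin (u.N + 1)).castSucc = i.succ := by
        ext; simp
      rw [he]
      exact hlt
    have hc := hmax _ hmem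
    rw [Fin.le_def] at hc
    simp at hc
  · have hlast : i.succ = Fin.last (u.N + 1) := by
      ext
      simp [Fin.last]
      omega
    rw [hlast, u.t_last] at hlt
    linarith

lemma measurable_toFun (u : PC a b) : Measurable u.toFun := by
  unfold PC.toFun
  refine Finset.measurable_sum _ (fun i _ => ?_)
  have hms : MeasurableSet {x : ℝ | u.t i.castSucc ≤ x ∧ x < u.t i.succ} :=
    measurableSet_Ico
  exact Measurable.ite hms measurable_const measurable_const

lemma abs_toFun_le (u : PC a b) (x : ℝ) :
    |u.toFun x| ≤ ∑ i : Fin (u.N + 1), |u.v i| := by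
  unfold PC.toFun
  refine (Finset.abs_sum_le_sum_abs _ _).trans (Finset.sum_le_sum fun i _ => ?_)
  split
  · exact le_rfl
  · simp [abs_nonneg]

lemma integrableOn_abs_sub (u1 u2 : PC a b) :
    IntegrableOn (fun x => |u1.toFun x - u2.toFun x|) (Ioo a b) := by
  have hmeas : Measurable fun x => |u1.toFun x - u2.toFun x| :=
    (u1.measurable_toFun.sub u2.measurable_toFun).abs
  have hfin : IsFiniteMeasure (volume.restrict (Ioo a b)) :=
    ⟨by rw [Measure.restrict_apply_univ]; exact measure_Ioo_lt_top⟩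
  refine ⟨hmeas.aestronglyMeasurable, ?_⟩
  refine HasFiniteIntegral.of_bounded
    (C := (∑ i : Fin (u1.N + 1), |u1.v i|) + ∑ i : Fin (u2.N + 1), |u2.v i|) ?_
  refine ae_of_all _ fun x => ?_
  rw [Real.norm_eq_abs, abs_abs]
  exact (abs_sub _ _).trans (add_le_add (u1.abs_toFun_le x) (u2.abs_toFun_le x))

lemma exists_point (u1 u2 : PC a b) {c d δ : ℝ}
    (hsub : Ioo c d ⊆ Ioo a b) (hcd : c < d) (hδ : 0 < δ)
    (hint : ∫ x in Ioo a b, |u1.toFun x - u2.toFun x| < δ * (d - c)) :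
    ∃ x ∈ Ioo c d, |u1.toFun x - u2.toFun x| < δ := by
  by_contra hcon
  push_neg at hcon
  have hInt := u1.integrableOn_abs_sub u2
  have h1 : δ * (volume (Ioo c d)).toReal ≤
      ∫ x in Ioo c d, |u1.toFun x - u2.toFun x| :=
    setIntegral_ge_of_const_le_real measurableSet_Ioo measure_Ioo_lt_top.ne hcon
      (hInt.mono_set hsub)
  have h2 : (∫ x in Ioo c d, |u1.toFun x - u2.toFun x|) ≤
      ∫ x in Ioo a b, |u1.toFun x - u2.toFun x| :=
    setIntegral_mono_set hInt (ae_of_all _ fun x => abs_nonneg _)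
      (HasSubset.Subset.eventuallyLE hsub)
  rw [Real.volume_Ioo, ENNReal.toReal_ofReal (by linarith)] at h1
  linarith

end PC

set_option maxHeartbeats 1000000 in
/-- If `h` is lower semicontinuous on `(ℝ∖{0}) × (ℝ∖{0})` and Cartesian submaximal, then `H`
is `L¹`-lower semicontinuous on piecewise constant functions. -/
theorem energyLSC_of_lsc_and_cartesianSubmaximal
    (a b : ℝ) (hab : a < b) (h : ℝ → ℝ → ℝ)
    (hsymm : ∀ ξ η : ℝ, ξ ≠ 0 → η ≠ 0 → h ξ η = h η ξ)
    (hdiag : ∀ ξ η : ℝ, ξ ≠ 0 → η ≠ 0 →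
      h ξ η = max (max (h ξ ξ) (h η η)) (max (h η ξ) (h ξ η)))
    (hl : LowerSemicontinuousOn (fun p : ℝ × ℝ => h p.1 p.2)
      {p : ℝ × ℝ | p.1 ≠ 0 ∧ p.2 ≠ 0})
    (hcs : CartesianSubmaximal h) :
    EnergyLSC a b h := by
  classical
  intro U u hconv
  unfold PC.L1Tendsto at hconv
  unfold PC.energy
  refine iSup_le fun i => iSup_le fun j => ?_
  set wI := u.jump i with hwIdef
  set wJ := u.jump j with hwJdef
  have hwI : wI ≠ 0 := sub_ne_zero.mpr (u.v_ne i).symm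
  have hwJ : wJ ≠ 0 := sub_ne_zero.mpr (u.v_ne j).symm
  refine le_of_forall_lt fun c hc => ?_
  obtain ⟨r, hcr, hrh⟩ := EReal.lt_iff_exists_real_btwn.mp hc
  have hr : r < h wI wJ := EReal.coe_lt_coe_iff.mp hrh
  have hmemS : ((wI, wJ) : ℝ × ℝ) ∈ {p : ℝ × ℝ | p.1 ≠ 0 ∧ p.2 ≠ 0} := ⟨hwI, hwJ⟩
  have hlsc := hl (wI, wJ) hmemS r hr
  obtain ⟨δ, hδpos, hball⟩ := Metric.mem_nhdsWithin_iff.mp hlsc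
  set δ₀ : ℝ := min δ (min |wI| |wJ|) with hδ₀def
  have hδ₀pos : 0 < δ₀ := lt_min hδpos (lt_min (abs_pos.mpr hwI) (abs_pos.mpr hwJ))
  have hδ₀δ : δ₀ ≤ δ := min_le_left _ _
  have hδ₀I : δ₀ ≤ |wI| := le_trans (min_le_right _ _) (min_le_left _ _)
  have hδ₀J : δ₀ ≤ |wJ| := le_trans (min_le_right _ _) (min_le_right _ _)
  have hiN : (i : ℕ) < u.N := i.isLt
  have hjN : (j : ℕ) < u.N := j.isLt
  set tI0 := u.t ⟨(i : ℕ), by omega⟩ with htI0def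
  set sI := u.t ⟨(i : ℕ) + 1, by omega⟩ with hsIdef
  set tI2 := u.t ⟨(i : ℕ) + 2, by omega⟩ with htI2def
  set tJ0 := u.t ⟨(j : ℕ), by omega⟩ with htJ0def
  set sJ := u.t ⟨(j : ℕ) + 1, by omega⟩ with hsJdef
  set tJ2 := u.t ⟨(j : ℕ) + 2, by omega⟩ with htJ2def
  have h_a_tI0 : a ≤ tI0 := by
    rw [← u.t_first, htI0def]
    exact u.t_mono.monotone (by simp only [Fin.le_def, Fin.val_zero, Fin.val_mk]; omega)
  have h_tI0_sI : tI0 < sI :=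
    u.t_mono (by simp only [Fin.lt_def, Fin.val_mk]; omega)
  have h_sI_tI2 : sI < tI2 :=
    u.t_mono (by simp only [Fin.lt_def, Fin.val_mk]; omega)
  have h_tI2_b : tI2 ≤ b := by
    rw [← u.t_last, htI2def]
    exact u.t_mono.monotone (by simp only [Fin.le_def, Fin.val_last, Fin.val_mk]; omega)
  have h_a_tJ0 : a ≤ tJ0 := by
    rw [← u.t_first, htJ0def]
    exact u.t_mono.monotone (by simp only [Fin.le_def, Fin.val_zero, Fin.val_mk]; omega)
  have h_tJ0_sJ : tJ0 < sJ :=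
    u.t_mono (by simp only [Fin.lt_def, Fin.val_mk]; omega)
  have h_sJ_tJ2 : sJ < tJ2 :=
    u.t_mono (by simp only [Fin.lt_def, Fin.val_mk]; omega)
  have h_tJ2_b : tJ2 ≤ b := by
    rw [← u.t_last, htJ2def]
    exact u.t_mono.monotone (by simp only [Fin.le_def, Fin.val_last, Fin.val_mk]; omega)
  set ρ : ℝ := min (min (sI - tI0) (tI2 - sI)) (min (sJ - tJ0) (tJ2 - sJ)) with hρdef
  have hρpos : 0 < ρ :=
    lt_min (lt_min (by linarith) (by linarith)) (lt_min (by linarith) (by linarith))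
  have hρ1 : ρ ≤ sI - tI0 := le_trans (min_le_left _ _) (min_le_left _ _)
  have hρ2 : ρ ≤ tI2 - sI := le_trans (min_le_left _ _) (min_le_right _ _)
  have hρ3 : ρ ≤ sJ - tJ0 := le_trans (min_le_right _ _) (min_le_left _ _)
  have hρ4 : ρ ≤ tJ2 - sJ := le_trans (min_le_right _ _) (min_le_right _ _)
  have hev0 : ∀ᶠ n in atTop,
      (∫ x in Ioo a b, |(U n).toFun x - u.toFun x|) < δ₀ / 3 * ρ :=
    hconv.eventually_lt_const (by positivity)
  have hev : ∀ᶠ n in atTop, (r : EReal) ≤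
      ⨆ (i' : Fin (U n).N) (j' : Fin (U n).N),
        ((h ((U n).jump i') ((U n).jump j') : ℝ) : EReal) := by
    filter_upwards [hev0] with n hn
    set M := ⨆ (i' : Fin (U n).N) (j' : Fin (U n).N),
        ((h ((U n).jump i') ((U n).jump j') : ℝ) : EReal) with hMdef
    have hM : ∀ m m' : Fin (U n).N,
        ((h ((U n).jump m) ((U n).jump m') : ℝ) : EReal) ≤ M :=
      fun m m' => le_iSup_of_le m (le_iSup_of_le m' le_rfl)
    have hgen : ∀ w, (∃ m, w = (U n).jump m) → ∀ w',
        (∃ m', w' = (U n).jump m') → ((h w w' : ℝ) : EReal) ≤ M := by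
      rintro w ⟨m, rfl⟩ w' ⟨m', rfl⟩
      exact hM m m'
    -- select sample points in the four half-windows
    obtain ⟨x₁, hx₁mem, hx₁⟩ := PC.exists_point (U n) u
      (c := sI - ρ) (d := sI) (δ := δ₀ / 3)
      (by intro z hz; exact ⟨by linarith [hz.1], by linarith [hz.2]⟩)
      (by linarith) (by positivity)
      (by rw [show sI - (sI - ρ) = ρ by ring]; exact hn)
    obtain ⟨y₁, hy₁mem, hy₁⟩ := PC.exists_point (U n) u
      (c := sI) (d := sI + ρ) (δ := δ₀ / 3)
      (by intro z hz; exact ⟨by linarith [hz.1], by linarith [hz.2]⟩)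
      (by linarith) (by positivity)
      (by rw [show sI + ρ - sI = ρ by ring]; exact hn)
    obtain ⟨x₂, hx₂mem, hx₂⟩ := PC.exists_point (U n) u
      (c := sJ - ρ) (d := sJ) (δ := δ₀ / 3)
      (by intro z hz; exact ⟨by linarith [hz.1], by linarith [hz.2]⟩)
      (by linarith) (by positivity)
      (by rw [show sJ - (sJ - ρ) = ρ by ring]; exact hn)
    obtain ⟨y₂, hy₂mem, hy₂⟩ := PC.exists_point (U n) u
      (c := sJ) (d := sJ + ρ) (δ := δ₀ / 3)
      (by intro z hz; exact ⟨by linarith [hz.1], by linarith [hz.2]⟩)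
      (by linarith) (by positivity)
      (by rw [show sJ + ρ - sJ = ρ by ring]; exact hn)
    -- values of u at the sample points
    have hux₁ : u.toFun x₁ = u.v i.castSucc := by
      have e1 : u.t i.castSucc.castSucc = tI0 := by
        rw [htI0def]; exact congrArg u.t (Fin.ext (by simp))
      have e2 : u.t i.castSucc.succ = sI := by
        rw [hsIdef]; exact congrArg u.t (Fin.ext (by simp))
      exact u.toFun_eq (by rw [e1]; linarith [hx₁mem.1]) (by rw [e2]; exact hx₁mem.2)
    have huy₁ : u.toFun y₁ = u.v i.succ := by
      have e1 : u.t i.succ.castSucc = sI := by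
        rw [hsIdef]; exact congrArg u.t (Fin.ext (by simp))
      have e2 : u.t i.succ.succ = tI2 := by
        rw [htI2def]; exact congrArg u.t (Fin.ext (by simp))
      exact u.toFun_eq (by rw [e1]; linarith [hy₁mem.1]) (by rw [e2]; linarith [hy₁mem.2])
    have hux₂ : u.toFun x₂ = u.v j.castSucc := by
      have e1 : u.t j.castSucc.castSucc = tJ0 := by
        rw [htJ0def]; exact congrArg u.t (Fin.ext (by simp))
      have e2 : u.t j.castSucc.succ = sJ := by
        rw [hsJdef]; exact congrArg u.t (Fin.ext (by simp))
      exact u.toFun_eq (by rw [e1]; linarith [hx₂mem.1]) (by rw [e2]; exact hx₂mem.2)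
    have huy₂ : u.toFun y₂ = u.v j.succ := by
      have e1 : u.t j.succ.castSucc = sJ := by
        rw [hsJdef]; exact congrArg u.t (Fin.ext (by simp))
      have e2 : u.t j.succ.succ = tJ2 := by
        rw [htJ2def]; exact congrArg u.t (Fin.ext (by simp))
      exact u.toFun_eq (by rw [e1]; linarith [hy₂mem.1]) (by rw [e2]; linarith [hy₂mem.2])
    -- indices of U n at the sample points
    obtain ⟨p₁, hp₁l, hp₁r⟩ := (U n).exists_index
      (x := x₁) (by linarith [hx₁mem.1]) (by linarith [hx₁mem.2])
    obtain ⟨q₁, hq₁l, hq₁r⟩ := (U n).exists_index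
      (x := y₁) (by linarith [hy₁mem.1]) (by linarith [hy₁mem.2])
    obtain ⟨p₂, hp₂l, hp₂r⟩ := (U n).exists_index
      (x := x₂) (by linarith [hx₂mem.1]) (by linarith [hx₂mem.2])
    obtain ⟨q₂, hq₂l, hq₂r⟩ := (U n).exists_index
      (x := y₂) (by linarith [hy₂mem.1]) (by linarith [hy₂mem.2])
    have hUx₁ : (U n).toFun x₁ = (U n).v p₁ := (U n).toFun_eq hp₁l hp₁r
    have hUy₁ : (U n).toFun y₁ = (U n).v q₁ := (U n).toFun_eq hq₁l hq₁r
    have hUx₂ : (U n).toFun x₂ = (U n).v p₂ := (U n).toFun_eq hp₂l hp₂r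
    have hUy₂ : (U n).toFun y₂ = (U n).v q₂ := (U n).toFun_eq hq₂l hq₂r
    have hpq₁ : (p₁ : ℕ) ≤ (q₁ : ℕ) := by
      by_contra hcon
      push_neg at hcon
      have hmo : (U n).t q₁.succ ≤ (U n).t p₁.castSucc :=
        (U n).t_mono.monotone
          (by simp only [Fin.le_def, Fin.val_succ, Fin.coe_castSucc]; omega)
      have : x₁ < y₁ := by linarith [hx₁mem.2, hy₁mem.1]
      linarith
    have hpq₂ : (p₂ : ℕ) ≤ (q₂ : ℕ) := by
      by_contra hcon
      push_neg at hcon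
      have hmo : (U n).t q₂.succ ≤ (U n).t p₂.castSucc :=
        (U n).t_mono.monotone
          (by simp only [Fin.le_def, Fin.val_succ, Fin.coe_castSucc]; omega)
      have : x₂ < y₂ := by linarith [hx₂mem.2, hy₂mem.1]
      linarith
    -- the lists of jumps of U n inside the windows
    set g : ℕ → ℝ := fun m => if hm : m < (U n).N + 1 then (U n).v ⟨m, hm⟩ else 0
      with hgdef
    have hgval : ∀ k : Fin ((U n).N + 1), g (k : ℕ) = (U n).v k := by
      intro k
      rw [hgdef]
      simp [k.isLt]
    set L₁ : List ℝ :=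
      ((Finset.Ico (p₁ : ℕ) (q₁ : ℕ)).toList).map (fun m => g (m + 1) - g m) with hL₁def
    set L₂ : List ℝ :=
      ((Finset.Ico (p₂ : ℕ) (q₂ : ℕ)).toList).map (fun m => g (m + 1) - g m) with hL₂def
    set ξ : ℝ := (U n).v q₁ - (U n).v p₁ with hξdef
    set η : ℝ := (U n).v q₂ - (U n).v p₂ with hηdef
    have hLs₁ : L₁.sum = ξ := by
      rw [hL₁def, Finset.sum_map_toList, Finset.sum_Ico_eq_sub _ hpq₁,
        Finset.sum_range_sub g, Finset.sum_range_sub g, hgval q₁, hgval p₁, hξdef]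
      ring
    have hLs₂ : L₂.sum = η := by
      rw [hL₂def, Finset.sum_map_toList, Finset.sum_Ico_eq_sub _ hpq₂,
        Finset.sum_range_sub g, Finset.sum_range_sub g, hgval q₂, hgval p₂, hηdef]
      ring
    have hjump₁ : ∀ w ∈ L₁, ∃ m : Fin (U n).N, w = (U n).jump m := by
      intro w hw
      rw [hL₁def, List.mem_map] at hw
      obtain ⟨m, hm, rfl⟩ := hw
      rw [Finset.mem_toList, Finset.mem_Ico] at hm
      have hq := q₁.isLt
      have hmN : m < (U n).N := by omega
      refine ⟨⟨m, hmN⟩, ?_⟩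
      rw [hgdef]
      simp only [PC.jump]
      rw [dif_pos (show m + 1 < (U n).N + 1 by omega),
        dif_pos (show m < (U n).N + 1 by omega)]
      rfl
    have hjump₂ : ∀ w ∈ L₂, ∃ m : Fin (U n).N, w = (U n).jump m := by
      intro w hw
      rw [hL₂def, List.mem_map] at hw
      obtain ⟨m, hm, rfl⟩ := hw
      rw [Finset.mem_toList, Finset.mem_Ico] at hm
      have hq := q₂.isLt
      have hmN : m < (U n).N := by omega
      refine ⟨⟨m, hmN⟩, ?_⟩
      rw [hgdef]
      simp only [PC.jump]
      rw [dif_pos (show m + 1 < (U n).N + 1 by omega),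
        dif_pos (show m < (U n).N + 1 by omega)]
      rfl
    have hne₁ : ∀ w ∈ L₁, w ≠ 0 := by
      intro w hw
      obtain ⟨m, rfl⟩ := hjump₁ w hw
      exact sub_ne_zero.mpr ((U n).v_ne m).symm
    have hne₂ : ∀ w ∈ L₂, w ≠ 0 := by
      intro w hw
      obtain ⟨m, rfl⟩ := hjump₂ w hw
      exact sub_ne_zero.mpr ((U n).v_ne m).symm
    -- distance of ξ, η to wI, wJ
    have hξdist : |ξ - wI| < 2 * (δ₀ / 3) := by
      have hrw : ξ - wI = ((U n).toFun y₁ - u.toFun y₁) - ((U n).toFun x₁ - u.toFun x₁) := by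
        rw [hUx₁, hUy₁, hux₁, huy₁, hξdef, hwIdef, PC.jump]
        ring
      rw [hrw]
      calc |((U n).toFun y₁ - u.toFun y₁) - ((U n).toFun x₁ - u.toFun x₁)|
          ≤ |(U n).toFun y₁ - u.toFun y₁| + |(U n).toFun x₁ - u.toFun x₁| := abs_sub _ _
        _ < 2 * (δ₀ / 3) := by linarith
    have hηdist : |η - wJ| < 2 * (δ₀ / 3) := by
      have hrw : η - wJ = ((U n).toFun y₂ - u.toFun y₂) - ((U n).toFun x₂ - u.toFun x₂) := by
        rw [hUx₂, hUy₂, hux₂, huy₂, hηdef, hwJdef, PC.jump]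
        ring
      rw [hrw]
      calc |((U n).toFun y₂ - u.toFun y₂) - ((U n).toFun x₂ - u.toFun x₂)|
          ≤ |(U n).toFun y₂ - u.toFun y₂| + |(U n).toFun x₂ - u.toFun x₂| := abs_sub _ _
        _ < 2 * (δ₀ / 3) := by linarith
    have hξ0 : ξ ≠ 0 := by
      intro h0
      rw [h0, zero_sub, abs_neg] at hξdist
      linarith
    have hη0 : η ≠ 0 := by
      intro h0
      rw [h0, zero_sub, abs_neg] at hηdist
      linarith
    have hL₁sum0 : L₁.sum ≠ 0 := by rw [hLs₁]; exact hξ0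
    have hL₂sum0 : L₂.sum ≠ 0 := by rw [hLs₂]; exact hη0
    -- lower semicontinuity bound
    have hballmem : ((ξ, η) : ℝ × ℝ) ∈ Metric.ball ((wI, wJ) : ℝ × ℝ) δ := by
      rw [Metric.mem_ball, Prod.dist_eq]
      apply max_lt
      · rw [Real.dist_eq]; linarith
      · rw [Real.dist_eq]; linarith
    have hrξη : r < h ξ η := by
      have := hball ⟨hballmem, ⟨hξ0, hη0⟩⟩
      simpa using this
    -- submaximality bound
    have hpairL₁ : ∀ p ∈ L₁, ∀ q ∈ L₁, ((h p q : ℝ) : EReal) ≤ M :=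
      fun p hp q hq => hgen p (hjump₁ p hp) q (hjump₁ q hq)
    have hpairL₂ : ∀ p ∈ L₂, ∀ q ∈ L₂, ((h p q : ℝ) : EReal) ≤ M :=
      fun p hp q hq => hgen p (hjump₂ p hp) q (hjump₂ q hq)
    have hcross : ∀ p ∈ L₁, ((h p η : ℝ) : EReal) ≤ M := by
      intro p hp
      rw [hsymm p η (hne₁ p hp) hη0, ← hLs₂]
      exact listLemma h hsymm hcs M L₂.length L₂ le_rfl p hne₂ hL₂sum0 (hne₁ p hp)
        hpairL₂ (fun q hq => hgen q (hjump₂ q hq) p (hjump₁ p hp))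
    have hfin : ((h ξ η : ℝ) : EReal) ≤ M := by
      rw [← hLs₁]
      exact listLemma h hsymm hcs M L₁.length L₁ le_rfl η hne₁ hL₁sum0 hη0
        hpairL₁ hcross
    exact le_trans (EReal.coe_le_coe_iff.mpr hrξη.le) hfin
  exact lt_of_lt_of_le hcr (le_liminf_of_le (h := hev))
end

section
/- Let α ∈ (0,1). Define h_α:ℝ×ℝ→[0,+∞] by h_α(w,y)=α·|sin w|/w + (1−α)·|sin y|/y if w>0 and y>0, h_α(w,y)=0 if w=0 or y=0, and h_α(w,y)=+∞ otherwise. Then h_α is separately submaximal: h_α(y, w₁+w₂) ≤ max{h_α(y,w₁), h_α(y,w₂)} for all y,w₁,w₂ ∈ ℝ. -/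
lemma sin_quot_submax (a b : ℝ) (ha : 0 < a) (hb : 0 < b) :
    |Real.sin (a + b)| / (a + b) ≤ max (|Real.sin a| / a) (|Real.sin b| / b) := by
  have hab : 0 < a + b := by linarith
  have h1 : |Real.sin (a + b)| ≤ |Real.sin a| + |Real.sin b| := by
    rw [Real.sin_add]
    calc |Real.sin a * Real.cos b + Real.cos a * Real.sin b|
        ≤ |Real.sin a * Real.cos b| + |Real.cos a * Real.sin b| := abs_add_le _ _
      _ ≤ |Real.sin a| + |Real.sin b| := by
          rw [abs_mul, abs_mul]
          have := Real.abs_cos_le_one a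
          have := Real.abs_cos_le_one b
          have := abs_nonneg (Real.sin a)
          have := abs_nonneg (Real.sin b)
          nlinarith
  have h2 : (|Real.sin a| + |Real.sin b|) / (a + b)
      ≤ max (|Real.sin a| / a) (|Real.sin b| / b) := by
    rcases le_total (|Real.sin a| / a) (|Real.sin b| / b) with hle | hle
    · refine le_trans ?_ (le_max_right _ _)
      rw [div_le_div_iff₀ ha hb] at hle
      rw [div_le_div_iff₀ hab hb]
      nlinarith
    · refine le_trans ?_ (le_max_left _ _)
      rw [div_le_div_iff₀ hb ha] at hle
      rw [div_le_div_iff₀ hab ha]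
      nlinarith
  exact le_trans (by gcongr) h2

/-- For `α ∈ (0,1)`, the function `h_α(w,y) = α |sin w|/w + (1-α) |sin y|/y` on
`(0,∞) × (0,∞)`, extended by `0` when `w = 0` or `y = 0` and by `+∞` otherwise, is
separately submaximal. -/
theorem convex_sin_quotient_separatelySubmaximal
    (α : ℝ) (hα : α ∈ Set.Ioo (0 : ℝ) 1)
    (h : ℝ → ℝ → EReal)
    (h_def : ∀ w y : ℝ, h w y =
      if 0 < w ∧ 0 < y then
        ((α * (|Real.sin w| / w) + (1 - α) * (|Real.sin y| / y) : ℝ) : EReal)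
      else if w = 0 ∨ y = 0 then 0
      else ⊤) :
    ∀ y w₁ w₂ : ℝ, h y (w₁ + w₂) ≤ max (h y w₁) (h y w₂) := by
  obtain ⟨hα0, hα1⟩ := hα
  intro y w₁ w₂
  rcases lt_trichotomy y 0 with hy | hy | hy
  · -- y < 0
    by_cases h1 : w₁ = 0
    · subst h1; rw [zero_add]; exact le_max_right _ _
    · have : h y w₁ = ⊤ := by
        rw [h_def]
        rw [if_neg (by push_neg; intro hc; linarith), if_neg (by push_neg; exact ⟨ne_of_lt hy, h1⟩)]
      rw [this]
      simp
  · subst hy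
    rw [h_def, h_def, h_def]
    norm_num
  · -- y > 0
    by_cases h1 : w₁ = 0
    · subst h1; rw [zero_add]; exact le_max_right _ _
    by_cases h2 : w₂ = 0
    · subst h2; rw [add_zero]; exact le_max_left _ _
    rcases lt_or_gt_of_ne h1 with hw1 | hw1
    · have : h y w₁ = ⊤ := by
        rw [h_def]
        rw [if_neg (by push_neg; intro hc; linarith), if_neg (by push_neg; exact ⟨ne_of_gt hy, h1⟩)]
      rw [this]; simp
    rcases lt_or_gt_of_ne h2 with hw2 | hw2
    · have : h y w₂ = ⊤ := by
        rw [h_def]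
        rw [if_neg (by push_neg; intro hc; linarith), if_neg (by push_neg; exact ⟨ne_of_gt hy, h2⟩)]
      rw [this]; simp
    -- all positive
    have hsum : 0 < w₁ + w₂ := by linarith
    rw [h_def, h_def, h_def, if_pos ⟨hy, hsum⟩, if_pos ⟨hy, hw1⟩, if_pos ⟨hy, hw2⟩]
    have key := sin_quot_submax w₁ w₂ hw1 hw2
    rcases max_cases (|Real.sin w₁| / w₁) (|Real.sin w₂| / w₂) with ⟨heq, _⟩ | ⟨heq, _⟩ <;>
      rw [heq] at key
    · refine le_trans ?_ (le_max_left _ _)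
      rw [EReal.coe_le_coe_iff]
      nlinarith
    · refine le_trans ?_ (le_max_right _ _)
      rw [EReal.coe_le_coe_iff]
      nlinarith
end
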